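/- arXiv:2602.04022 — 4 statements merged into one kernel-verified Lean document; each statement's English description precedes it below -/
import Mathlib

section
/- The series over prime numbers ∑_p 1/(p·log p) converges. -/
open Finset

/-- Chebyshev-type bound: the number of primes with `Nat.log 2 p = m` satisfies
`m * card ≤ 2 ^ (m + 2)`. -/
lemma block_card_bound (m : ℕ) (s : Finset ℕ)
    (hs : ∀ p ∈ s, p.Prime ∧ Nat.log 2 p = m) :
    m * s.card ≤ 2 ^ (m + 2) := by
  have h1 : (2 : ℕ) ^ (m * s.card) ≤ 2 ^ (2 ^ (m + 2)) := by
    calc (2 : ℕ) ^ (m * s.card) = ∏ _p ∈ s, 2 ^ m := by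
          rw [prod_const, ← pow_mul]
      _ ≤ ∏ p ∈ s, p := by
          refine prod_le_prod' fun p hp => ?_
          obtain ⟨hp1, hp2⟩ := hs p hp
          simpa [hp2] using Nat.pow_log_le_self 2 hp1.pos.ne'
      _ ≤ primorial (2 ^ (m + 1)) := by
          refine prod_le_prod_of_subset_of_one_le' ?_ fun i hi _ => ?_
          · intro p hp
            obtain ⟨hp1, hp2⟩ := hs p hp
            simp only [primorial, mem_filter, mem_range]
            refine ⟨?_, hp1⟩
            have := Nat.lt_pow_succ_log_self (by norm_num : 1 < 2) p
            rw [hp2] at this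
            omega
          · exact (by simpa using hi : i ≤ 2 ^ (m + 1) ∧ Nat.Prime i).2.one_lt.le
      _ ≤ 4 ^ (2 ^ (m + 1)) := primorial_le_4_pow _
      _ = 2 ^ (2 ^ (m + 2)) := by
          rw [show (4 : ℕ) = 2 ^ 2 by norm_num, ← pow_mul, pow_succ]
          ring_nf
  exact (Nat.pow_le_pow_iff_right one_lt_two).mp h1

lemma fiber_sum_bound (m : ℕ) (hm : 1 ≤ m) (s : Finset Nat.Primes)
    (hs : ∀ p ∈ s, Nat.log 2 (p : ℕ) = m) :
    ∑ p ∈ s, 1 / ((p : ℝ) * Real.log (p : ℝ)) ≤ 4 / (Real.log 2 * (m : ℝ) ^ 2) := by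
  have hlog2 : (0 : ℝ) < Real.log 2 := Real.log_pos one_lt_two
  have hm' : (0 : ℝ) < (m : ℝ) := by exact_mod_cast hm
  -- each term is at most 1 / (2^m * (m * log 2))
  have hterm : ∀ p ∈ s, 1 / ((p : ℝ) * Real.log (p : ℝ))
      ≤ 1 / ((2 : ℝ) ^ m * ((m : ℝ) * Real.log 2)) := by
    intro p hp
    have hple : (2 : ℕ) ^ m ≤ (p : ℕ) := by
      have := Nat.pow_log_le_self 2 p.2.pos.ne'
      rwa [hs p hp] at this
    have hpleR : (2 : ℝ) ^ m ≤ (p : ℝ) := by exact_mod_cast hple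
    have h2m : (0 : ℝ) < (2 : ℝ) ^ m := by positivity
    have hlogp : (m : ℝ) * Real.log 2 ≤ Real.log (p : ℝ) := by
      have := Real.log_le_log (by positivity) hpleR
      rwa [Real.log_pow] at this
    refine one_div_le_one_div_of_le (by positivity) ?_
    exact mul_le_mul hpleR hlogp (by positivity) ((p : ℕ).cast_nonneg)
  calc ∑ p ∈ s, 1 / ((p : ℝ) * Real.log (p : ℝ))
      ≤ ∑ _p ∈ s, 1 / ((2 : ℝ) ^ m * ((m : ℝ) * Real.log 2)) := sum_le_sum hterm
    _ = (s.card : ℝ) * (1 / ((2 : ℝ) ^ m * ((m : ℝ) * Real.log 2))) := by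
        rw [sum_const, nsmul_eq_mul]
    _ ≤ 4 / (Real.log 2 * (m : ℝ) ^ 2) := by
        have hcard : (m : ℝ) * (s.card : ℝ) ≤ (2 : ℝ) ^ (m + 2) := by
          have : m * (s.image (fun p : Nat.Primes => (p : ℕ))).card ≤ 2 ^ (m + 2) := by
            refine block_card_bound m _ fun p hp => ?_
            obtain ⟨q, hq, rfl⟩ := mem_image.mp hp
            exact ⟨q.2, hs q hq⟩
          rw [Finset.card_image_of_injective _ (show Function.Injective (fun p : Nat.Primes => (p : ℕ)) from Nat.Primes.coe_nat_injective)] at this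
          exact_mod_cast this
        rw [mul_one_div, div_le_div_iff₀ (by positivity) (by positivity)]
        have h22 : (2 : ℝ) ^ (m + 2) = 4 * 2 ^ m := by ring
        calc (s.card : ℝ) * (Real.log 2 * (m : ℝ) ^ 2)
            = ((m : ℝ) * s.card) * (Real.log 2 * m) := by ring
          _ ≤ (2 : ℝ) ^ (m + 2) * (Real.log 2 * m) := by
              refine mul_le_mul_of_nonneg_right hcard (by positivity)
          _ = 4 * (2 ^ m * ((m : ℝ) * Real.log 2)) := by rw [h22]; ring

theorem chebyshev_sum_one_div_p_log_p_converges :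
    Summable (fun p : Nat.Primes => 1 / ((p : ℝ) * Real.log (p : ℝ))) := by
  have hlog2 : (0 : ℝ) < Real.log 2 := Real.log_pos one_lt_two
  -- the dominating series
  set F : ℕ → ℝ := fun k => 4 / (Real.log 2 * ((k : ℝ) + 1) ^ 2) with hF
  have hFnn : ∀ k, 0 ≤ F k := fun k => by positivity
  have hFsum : Summable F := by
    have h1 : Summable (fun k : ℕ => (((k : ℝ) + 1) ^ 2)⁻¹) := by
      have := (Real.summable_one_div_nat_pow (p := 2)).mpr one_lt_two
      have h2 := (summable_nat_add_iff 1).mpr this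
      simpa [one_div] using h2
    have := h1.mul_left (4 / Real.log 2)
    refine this.congr fun k => ?_
    simp only [hF, div_eq_mul_inv, mul_inv]
    ring
  have hnn : ∀ p : Nat.Primes, 0 ≤ 1 / ((p : ℝ) * Real.log (p : ℝ)) := by
    intro p
    have h2 : (2 : ℝ) ≤ (p : ℝ) := by exact_mod_cast p.2.two_le
    have : (0 : ℝ) < Real.log (p : ℝ) := Real.log_pos (by linarith)
    positivity
  refine summable_of_sum_le (c := ∑' k, F k) hnn fun u => ?_
  -- group the primes in `u` by `Nat.log 2 p - 1`
  classical
  set ℓ : Nat.Primes → ℕ := fun p => Nat.log 2 (p : ℕ) - 1 with hℓ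
  have key : ∀ p : Nat.Primes, Nat.log 2 (p : ℕ) = ℓ p + 1 := by
    intro p
    have : 1 ≤ Nat.log 2 (p : ℕ) := Nat.log_pos one_lt_two p.2.two_le
    simp only [hℓ]
    omega
  calc ∑ p ∈ u, 1 / ((p : ℝ) * Real.log (p : ℝ))
      = ∑ k ∈ u.image ℓ, ∑ p ∈ u.filter (fun p => ℓ p = k),
          1 / ((p : ℝ) * Real.log (p : ℝ)) := by
        rw [Finset.sum_fiberwise_of_maps_to]
        intro p hp
        exact mem_image_of_mem ℓ hp
    _ ≤ ∑ k ∈ u.image ℓ, F k := by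
        refine sum_le_sum fun k _ => ?_
        have hb := fiber_sum_bound (k + 1) (Nat.le_add_left 1 k)
          (u.filter (fun p => ℓ p = k)) ?_
        · refine hb.trans_eq ?_
          rw [hF]
          push_cast
          ring
        · intro p hp
          have := (mem_filter.mp hp).2
          rw [key p, this]
    _ ≤ ∑' k, F k := Summable.sum_le_tsum _ (fun k _ => hFnn k) hFsum
end

section
/- The Chebyshev theta function satisfies θ(x) ~ x as x → ∞ if and only if π(x) ~ x/log x as x → ∞, where θ(x) = ∑_{p ≤ x} log p and π(x) counts primes up to x. -/
open Filter

/-- The first Chebyshev function `θ(x) = ∑_{p ≤ x} log p`. -/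
noncomputable def chebyshevTheta (x : ℝ) : ℝ :=
  ∑ p ∈ (Finset.range (⌊x⌋₊ + 1)).filter Nat.Prime, Real.log p

lemma card_filter_prime_eq (n : ℕ) :
    ((Finset.range (n + 1)).filter Nat.Prime).card = Nat.primeCounting n := by
  rw [Nat.primeCounting, Nat.primeCounting', Nat.count_eq_card_filter_range]

/-- Upper bound: `θ(x) ≤ π(x) log x` for `x ≥ 1`. -/
lemma chebyshevTheta_le (x : ℝ) (hx : 1 ≤ x) :
    chebyshevTheta x ≤ (Nat.primeCounting ⌊x⌋₊ : ℝ) * Real.log x := by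
  have hx0 : (0 : ℝ) ≤ x := by linarith
  rw [← card_filter_prime_eq]
  unfold chebyshevTheta
  have h := Finset.sum_le_card_nsmul ((Finset.range (⌊x⌋₊ + 1)).filter Nat.Prime)
    (fun p => Real.log p) (Real.log x) ?_
  · simpa [nsmul_eq_mul] using h
  · intro p hp
    simp only [Finset.mem_filter, Finset.mem_range] at hp
    have hp2 : 2 ≤ p := hp.2.two_le
    have hple : (p : ℝ) ≤ x := by
      have : p ≤ ⌊x⌋₊ := Nat.lt_succ_iff.mp hp.1
      exact le_trans (by exact_mod_cast this) (Nat.floor_le hx0)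
    exact Real.log_le_log (by positivity) hple

/-- Lower bound: `π(x) log x ≤ θ(x)/ε + (x^ε + 1) log x` for `0 < ε < 1`, `x ≥ 2`. -/
lemma primeCounting_mul_log_le (ε : ℝ) (hε0 : 0 < ε) (x : ℝ) (hx : 2 ≤ x) :
    (Nat.primeCounting ⌊x⌋₊ : ℝ) * Real.log x ≤
      chebyshevTheta x / ε + (x ^ ε + 1) * Real.log x := by
  have hx0 : (0 : ℝ) < x := by linarith
  have hx1 : (1 : ℝ) ≤ x := by linarith
  have hlog : 0 ≤ Real.log x := Real.log_nonneg hx1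
  set F := (Finset.range (⌊x⌋₊ + 1)).filter Nat.Prime with hF
  set T := F.filter (fun p : ℕ => x ^ ε < (p : ℝ)) with hT
  set T' := F.filter (fun p : ℕ => ¬ x ^ ε < (p : ℝ)) with hT'
  have hcard : T.card + T'.card = F.card :=
    Finset.card_filter_add_card_filter_not (fun p : ℕ => x ^ ε < (p : ℝ))
  -- T' is small
  have hT'le : (T'.card : ℝ) ≤ x ^ ε + 1 := by
    have hsub : T' ⊆ Finset.range (⌊x ^ ε⌋₊ + 1) := by
      intro p hp
      simp only [hT', Finset.mem_filter, not_lt] at hp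
      have : (p : ℝ) ≤ x ^ ε := hp.2
      exact Finset.mem_range.mpr (Nat.lt_succ_iff.mpr (Nat.le_floor this))
    have h1 : T'.card ≤ ⌊x ^ ε⌋₊ + 1 := by
      simpa using Finset.card_le_card hsub
    have h2 : (⌊x ^ ε⌋₊ : ℝ) ≤ x ^ ε := Nat.floor_le (by positivity)
    have := (Nat.cast_le (α := ℝ)).mpr h1
    push_cast at this
    linarith
  -- θ is at least card T * ε log x
  have hθT : (T.card : ℝ) * (ε * Real.log x) ≤ chebyshevTheta x := by
    have hsum1 : (T.card : ℝ) * (ε * Real.log x) ≤ ∑ p ∈ T, Real.log p := by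
      have h := Finset.card_nsmul_le_sum T (fun p => Real.log p) (ε * Real.log x) ?_
      · simpa [nsmul_eq_mul] using h
      · intro p hp
        simp only [hT, hF, Finset.mem_filter] at hp
        have hplt : x ^ ε < (p : ℝ) := hp.2
        have : Real.log (x ^ ε) ≤ Real.log p :=
          Real.log_le_log (by positivity) hplt.le
        rwa [Real.log_rpow hx0] at this
    have hsum2 : ∑ p ∈ T, Real.log p ≤ ∑ p ∈ F, Real.log p := by
      apply Finset.sum_le_sum_of_subset_of_nonneg (Finset.filter_subset _ _)
      intro p hp _
      simp only [hF, Finset.mem_filter] at hp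
      have : (1 : ℝ) ≤ p := by exact_mod_cast hp.2.one_lt.le
      exact Real.log_nonneg this
    calc (T.card : ℝ) * (ε * Real.log x) ≤ ∑ p ∈ T, Real.log p := hsum1
      _ ≤ ∑ p ∈ F, Real.log p := hsum2
      _ = chebyshevTheta x := rfl
  -- combine
  have hπ : (Nat.primeCounting ⌊x⌋₊ : ℝ) = (T.card : ℝ) + (T'.card : ℝ) := by
    rw [← card_filter_prime_eq, ← hF, ← hcard]; push_cast; ring
  have hTdiv : (T.card : ℝ) * Real.log x ≤ chebyshevTheta x / ε := by
    rw [le_div_iff₀ hε0]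
    nlinarith [hθT]
  have hT'div : (T'.card : ℝ) * Real.log x ≤ (x ^ ε + 1) * Real.log x :=
    mul_le_mul_of_nonneg_right hT'le hlog
  rw [hπ]
  nlinarith [hTdiv, hT'div]

/-- The error term `(x^ε + 1) log x / x` tends to `0` for `ε < 1`. -/
lemma error_tendsto_zero (ε : ℝ) (hε1 : ε < 1) :
    Tendsto (fun x : ℝ => (x ^ ε + 1) * Real.log x / x) atTop (nhds 0) := by
  have h1 : Tendsto (fun x : ℝ => Real.log x / x ^ (1 - ε)) atTop (nhds 0) :=
    (isLittleO_log_rpow_atTop (by linarith)).tendsto_div_nhds_zero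
  have h2 : Tendsto (fun x : ℝ => Real.log x / x ^ (1 : ℝ)) atTop (nhds 0) :=
    (isLittleO_log_rpow_atTop one_pos).tendsto_div_nhds_zero
  have h2' : Tendsto (fun x : ℝ => Real.log x / x) atTop (nhds 0) := by
    refine h2.congr' ?_
    filter_upwards [eventually_gt_atTop (0 : ℝ)] with x hx
    rw [Real.rpow_one]
  have h1' : Tendsto (fun x : ℝ => x ^ ε * Real.log x / x) atTop (nhds 0) := by
    refine h1.congr' ?_
    filter_upwards [eventually_gt_atTop (0 : ℝ)] with x hx
    have hxε : (0 : ℝ) < x ^ (1 - ε) := Real.rpow_pos_of_pos hx _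
    rw [div_eq_div_iff hxε.ne' hx.ne']
    rw [mul_comm (x ^ ε) (Real.log x), mul_assoc, ← Real.rpow_add hx]
    norm_num
  have := h1'.add h2'
  rw [add_zero] at this
  refine this.congr ?_
  intro x
  ring

open Real in
theorem chebyshevTheta_asymp_iff_pnt :
    Tendsto (fun x : ℝ => chebyshevTheta x / x) atTop (nhds 1) ↔
      Tendsto (fun x : ℝ => (Nat.primeCounting ⌊x⌋₊ : ℝ) / (x / Real.log x))
        atTop (nhds 1) := by
  have hBeq : (fun x : ℝ => (Nat.primeCounting ⌊x⌋₊ : ℝ) / (x / Real.log x)) =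
      fun x : ℝ => (Nat.primeCounting ⌊x⌋₊ : ℝ) * Real.log x / x := by
    funext x; rw [div_div_eq_mul_div]
  rw [hBeq]
  set A := fun x : ℝ => chebyshevTheta x / x with hA
  set B := fun x : ℝ => (Nat.primeCounting ⌊x⌋₊ : ℝ) * Real.log x / x with hB
  -- A ≤ B eventually
  have hAB : ∀ᶠ x : ℝ in atTop, A x ≤ B x := by
    filter_upwards [eventually_ge_atTop (1 : ℝ)] with x hx
    have hx0 : (0 : ℝ) < x := by linarith
    have := chebyshevTheta_le x hx
    simp only [hA, hB]
    gcongr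
  -- B ≤ A/ε + err eventually
  have hBA : ∀ ε : ℝ, 0 < ε → ∀ᶠ x : ℝ in atTop,
      B x ≤ A x / ε + (x ^ ε + 1) * Real.log x / x := by
    intro ε hε0
    filter_upwards [eventually_ge_atTop (2 : ℝ)] with x hx
    have hx0 : (0 : ℝ) < x := by linarith
    have key := primeCounting_mul_log_le ε hε0 x hx
    have hdiv : B x ≤ (chebyshevTheta x / ε + (x ^ ε + 1) * Real.log x) / x := by
      simp only [hB]; gcongr
    calc B x ≤ (chebyshevTheta x / ε + (x ^ ε + 1) * Real.log x) / x := hdiv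
      _ = A x / ε + (x ^ ε + 1) * Real.log x / x := by
          simp only [hA]; ring
  constructor
  · intro hAt
    rw [tendsto_order]
    constructor
    · intro a ha
      filter_upwards [hAt.eventually_const_lt ha, hAB] with x h1 h2
      linarith
    · intro a ha
      set ε : ℝ := 2 / (a + 1) with hεdef
      have ha1 : (1 : ℝ) < a := ha
      have hε0 : 0 < ε := by positivity
      have hεinv : 1 / ε < a := by
        rw [hεdef, one_div_div]
        linarith
      have hg : Tendsto (fun x : ℝ => A x / ε + (x ^ ε + 1) * Real.log x / x)
          atTop (nhds (1 / ε + 0)) :=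
        (hAt.div_const ε).add (error_tendsto_zero ε (by
          rw [hεdef, div_lt_one (by linarith)]; linarith))
      rw [add_zero] at hg
      filter_upwards [hg.eventually_lt_const hεinv, hBA ε hε0] with x h1 h2
      linarith
  · intro hBt
    rw [tendsto_order]
    constructor
    · intro a ha
      set ε : ℝ := max (1 / 2) ((a + 1) / 2) with hεdef
      have hε0 : 0 < ε := lt_max_of_lt_left (by norm_num)
      have hε1 : ε < 1 := max_lt (by norm_num) (by linarith)
      have hεa : a < ε := lt_max_of_lt_right (by linarith)
      have hh : Tendsto (fun x : ℝ => ε * B x - ε * ((x ^ ε + 1) * Real.log x / x))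
          atTop (nhds (ε * 1 - ε * 0)) :=
        ((tendsto_const_nhds.mul hBt).sub
          (tendsto_const_nhds.mul (error_tendsto_zero ε hε1)))
      rw [mul_one, mul_zero, sub_zero] at hh
      have hhA : ∀ᶠ x : ℝ in atTop,
          ε * B x - ε * ((x ^ ε + 1) * Real.log x / x) ≤ A x := by
        filter_upwards [eventually_ge_atTop (2 : ℝ)] with x hx
        have hx0 : (0 : ℝ) < x := by linarith
        have key := primeCounting_mul_log_le ε hε0 x hx
        have h1 : ((Nat.primeCounting ⌊x⌋₊ : ℝ) * Real.log x
            - (x ^ ε + 1) * Real.log x) * ε ≤ chebyshevTheta x := by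
          rw [← le_div_iff₀ hε0]
          linarith
        have h2 : ((Nat.primeCounting ⌊x⌋₊ : ℝ) * Real.log x
            - (x ^ ε + 1) * Real.log x) * ε / x ≤ chebyshevTheta x / x := by gcongr
        calc ε * B x - ε * ((x ^ ε + 1) * Real.log x / x)
            = ((Nat.primeCounting ⌊x⌋₊ : ℝ) * Real.log x
              - (x ^ ε + 1) * Real.log x) * ε / x := by
              simp only [hB]; ring
          _ ≤ chebyshevTheta x / x := h2
          _ = A x := rfl
      filter_upwards [hh.eventually_const_lt hεa, hhA] with x h1 h2
      linarith
    · intro a ha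
      filter_upwards [hBt.eventually_lt_const ha, hAB] with x h1 h2
      linarith
end

section
/- Let H be a complex Hilbert space, let x_1, ..., x_n ∈ H, and let b_1, ..., b_n be complex numbers with |b_j| ≤ 1 for all j. Then there exist complex numbers a_1, ..., a_n with |a_j| = 1 for all j such that ‖∑_{j=1}^n a_j x_j - ∑_{j=1}^n b_j x_j‖² ≤ 4·∑_{j=1}^n ‖x_j‖². -/
open Finset

lemma exists_unimodular_pair (b : ℂ) (hb : ‖b‖ ≤ 1) :
    ∃ c d : ℂ, ‖c‖ = 1 ∧ ‖d‖ = 1 ∧ c + d = 2 * b := by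
  have h1 : (0:ℝ) ≤ 1 - ‖b‖^2 := by nlinarith [norm_nonneg b]
  set s := Real.sqrt (1 - ‖b‖^2) with hs
  have hs2 : s^2 = 1 - ‖b‖^2 := Real.sq_sqrt h1
  by_cases hb0 : b = 0
  · exact ⟨Complex.I, -Complex.I, by simp, by simp, by simp [hb0]⟩
  · have hbn : ‖b‖ ≠ 0 := norm_ne_zero_iff.mpr hb0
    set w : ℂ := b / (‖b‖ : ℂ) with hw
    have hbnc : ((‖b‖ : ℝ) : ℂ) ≠ 0 := by exact_mod_cast hbn
    have hnn : ‖((‖b‖ : ℝ) : ℂ)‖ = ‖b‖ := by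
      simp [Complex.norm_real, abs_of_nonneg (norm_nonneg b)]
    have hwn : ‖w‖ = 1 := by
      rw [hw, norm_div, hnn, div_self hbn]
    have key : ‖((‖b‖ : ℂ) + (s : ℂ) * Complex.I)‖ = 1 := by
      rw [Complex.norm_add_mul_I]
      rw [hs2]
      simp [show ‖b‖^2 + (1 - ‖b‖^2) = 1 by ring]
    have key2 : ‖((‖b‖ : ℂ) - (s : ℂ) * Complex.I)‖ = 1 := by
      rw [show ((‖b‖ : ℂ) - (s : ℂ) * Complex.I) = (‖b‖ : ℂ) + (-s : ℝ) * Complex.I by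
        push_cast; ring]
      rw [Complex.norm_add_mul_I]
      rw [show (-s)^2 = s^2 by ring, hs2]
      simp [show ‖b‖^2 + (1 - ‖b‖^2) = 1 by ring]
    have hbw : (‖b‖ : ℂ) * w = b := by
      rw [hw, ← mul_div_assoc, mul_div_cancel_left₀ _ hbnc]
    refine ⟨((‖b‖ : ℂ) + (s : ℂ) * Complex.I) * w, ((‖b‖ : ℂ) - (s : ℂ) * Complex.I) * w,
      ?_, ?_, ?_⟩
    · rw [norm_mul, key, hwn]; ring
    · rw [norm_mul, key2, hwn]; ring
    · have : ((‖b‖ : ℂ) + (s : ℂ) * Complex.I) * w + ((‖b‖ : ℂ) - (s : ℂ) * Complex.I) * w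
          = 2 * ((‖b‖ : ℂ) * w) := by ring
      rw [this, hbw]

lemma rounding_aux {H : Type*} [NormedAddCommGroup H] [InnerProductSpace ℂ H]
    (n : ℕ) : ∀ (x : Fin n → H) (b : Fin n → ℂ), (∀ j, ‖b j‖ ≤ 1) →
    ∃ a : Fin n → ℂ, (∀ j, ‖a j‖ = 1) ∧
      ‖∑ j, (a j - b j) • x j‖ ^ 2 ≤ 4 * ∑ j, ‖x j‖ ^ 2 := by
  induction n with
  | zero =>
    intro x b _
    exact ⟨fun j => 1, fun j => j.elim0, by simp⟩
  | succ n ih =>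
    intro x b hb
    obtain ⟨a', ha'1, ha'2⟩ := ih (fun j => x j.castSucc) (fun j => b j.castSucc)
      (fun j => hb j.castSucc)
    obtain ⟨c, d, hc1, hd1, hcd⟩ := exists_unimodular_pair (b (Fin.last n)) (hb _)
    set S : H := ∑ j : Fin n, (a' j - b j.castSucc) • x j.castSucc with hS
    set v : H := x (Fin.last n) with hv
    set t : ℂ := c - b (Fin.last n) with ht
    have htd : d - b (Fin.last n) = -t := by rw [ht]; linear_combination hcd
    have hnsl : ‖t‖ ≤ ‖c‖ + ‖b (Fin.last n)‖ := norm_sub_le _ _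
    have htle : ‖t‖ ≤ 2 := by
      rw [hc1] at hnsl
      linarith [hb (Fin.last n)]
    have htv : ‖t • v‖^2 ≤ 4 * ‖v‖^2 := by
      rw [norm_smul, mul_pow]
      have : ‖t‖^2 ≤ 4 := by nlinarith [norm_nonneg t]
      nlinarith [sq_nonneg ‖v‖]
    have hpar := parallelogram_law_with_norm ℂ S (t • v)
    have hmin : ‖S + t • v‖^2 ≤ ‖S‖^2 + ‖t • v‖^2 ∨
        ‖S - t • v‖^2 ≤ ‖S‖^2 + ‖t • v‖^2 := by
      rcases le_total ‖S + t • v‖ ‖S - t • v‖ with h | h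
      · left; nlinarith [norm_nonneg (S + t • v), norm_nonneg (S - t • v)]
      · right; nlinarith [norm_nonneg (S + t • v), norm_nonneg (S - t • v)]
    have hsum4 : 4 * ∑ j : Fin (n+1), ‖x j‖^2 =
        4 * (∑ j : Fin n, ‖x j.castSucc‖^2) + 4 * ‖v‖^2 := by
      rw [Fin.sum_univ_castSucc]; ring
    rcases hmin with h | h
    · refine ⟨Fin.snoc a' c, ?_, ?_⟩
      · intro j
        refine Fin.lastCases ?_ ?_ j
        · simp [hc1]
        · intro i; simp [ha'1 i]
      · have hsum : ∑ j : Fin (n+1), ((Fin.snoc a' c : Fin (n+1) → ℂ) j - b j) • x j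
            = S + t • v := by
          rw [Fin.sum_univ_castSucc]
          simp [hS, ht, hv]
        rw [hsum, hsum4]
        calc ‖S + t • v‖^2 ≤ ‖S‖^2 + ‖t • v‖^2 := h
        _ ≤ 4 * (∑ j : Fin n, ‖x j.castSucc‖^2) + 4 * ‖v‖^2 := by
            exact add_le_add ha'2 htv
    · refine ⟨Fin.snoc a' d, ?_, ?_⟩
      · intro j
        refine Fin.lastCases ?_ ?_ j
        · simp [hd1]
        · intro i; simp [ha'1 i]
      · have hsum : ∑ j : Fin (n+1), ((Fin.snoc a' d : Fin (n+1) → ℂ) j - b j) • x j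
            = S - t • v := by
          rw [Fin.sum_univ_castSucc]
          simp only [Fin.snoc_castSucc, Fin.snoc_last, htd]
          rw [hS, neg_smul]
          abel
        rw [hsum, hsum4]
        calc ‖S - t • v‖^2 ≤ ‖S‖^2 + ‖t • v‖^2 := h
        _ ≤ 4 * (∑ j : Fin n, ‖x j.castSucc‖^2) + 4 * ‖v‖^2 := by
            exact add_le_add ha'2 htv

theorem rounding_lemma {H : Type*} [NormedAddCommGroup H] [InnerProductSpace ℂ H]
    [CompleteSpace H] (n : ℕ) (x : Fin n → H) (b : Fin n → ℂ)
    (hb : ∀ j, ‖b j‖ ≤ 1) :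
    ∃ a : Fin n → ℂ, (∀ j, ‖a j‖ = 1) ∧
      ‖(∑ j, a j • x j) - ∑ j, b j • x j‖ ^ 2 ≤ 4 * ∑ j, ‖x j‖ ^ 2 := by
  obtain ⟨a, ha1, ha2⟩ := rounding_aux n x b hb
  refine ⟨a, ha1, ?_⟩
  have : (∑ j, a j • x j) - ∑ j, b j • x j = ∑ j, (a j - b j) • x j := by
    rw [← Finset.sum_sub_distrib]
    simp [sub_smul]
  rw [this]
  exact ha2
end

section
/- Let h_n denote the n-th Hermite function, the L²-normalized eigenfunction of the harmonic oscillator H f(u) = -f''(u) + 4π²u² f(u) with eigenvalue 2π(1+2n). Then there is, up to a multiplicative scalar, a unique linear combination h = α·h_0 + β·h_4 with ∫_ℝ h(u) du = 0; explicitly one may take h = (√3/(4·2^{3/4}))·h_4 - (3/2^{17/4})·h_0, and then ‖h‖_{L²} = √33/2^{17/4}. -/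
open MeasureTheory Real

/-- The `n`-th Hermite function, normalized in `L²(ℝ)`, eigenfunction of the harmonic
oscillator `H f (u) = -f''(u) + 4π²u² f(u)` with eigenvalue `2π(1+2n)`. -/
noncomputable def hermiteFun (n : ℕ) : ℝ → ℝ := fun u =>
  (2 : ℝ) ^ ((1 : ℝ) / 4) / Real.sqrt (Nat.factorial n) *
    (Polynomial.aeval (2 * Real.sqrt π * u) (Polynomial.hermite n)) *
    Real.exp (-π * u ^ 2)


open Polynomial in
lemma hermite_four : Polynomial.hermite 4 = X^4 - Polynomial.C 6 * X^2 + Polynomial.C 3 := by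
  rw [show (4:ℕ) = 3+1 from rfl, Polynomial.hermite_succ,
      show (3:ℕ) = 2+1 from rfl, Polynomial.hermite_succ,
      show (2:ℕ) = 1+1 from rfl, Polynomial.hermite_succ, Polynomial.hermite_one]
  simp [derivative_sub, derivative_mul]
  ring

lemma integrable_pow_mul_gauss {b : ℝ} (hb : 0 < b) (n : ℕ) :
    Integrable fun x : ℝ => x ^ n * Real.exp (-b * x ^ 2) := by
  have h2 : Integrable fun x : ℝ => x ^ (2*n) * Real.exp (-b * x ^ 2) := by
    have h := integrable_rpow_mul_exp_neg_mul_sq hb (s := ((2*n : ℕ) : ℝ))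
      (by exact_mod_cast neg_one_lt_zero.trans_le (Nat.cast_nonneg _))
    simpa only [Real.rpow_natCast] using h
  refine ((integrable_exp_neg_mul_sq hb).add h2).mono' ?_ ?_
  · exact ((continuous_pow n).mul (by continuity)).aestronglyMeasurable
  · filter_upwards with x
    have hx : |x| ^ n ≤ 1 + |x| ^ (2*n) := by
      rcases le_total |x| 1 with h | h
      · calc |x| ^ n ≤ 1 := pow_le_one₀ (abs_nonneg x) h
          _ ≤ 1 + |x| ^ (2*n) := le_add_of_nonneg_right (by positivity)
      · calc |x| ^ n ≤ |x| ^ (2*n) := pow_le_pow_right₀ h (by omega)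
          _ ≤ 1 + |x| ^ (2*n) := le_add_of_nonneg_left zero_le_one
    have habs : |x| ^ (2*n) = x ^ (2*n) := by
      rw [← abs_pow, abs_of_nonneg (even_two_mul n |>.pow_nonneg x)]
    rw [Real.norm_eq_abs, abs_mul, abs_of_nonneg (Real.exp_pos _).le, abs_pow]
    calc |x| ^ n * Real.exp (-b*x^2) ≤ (1 + x ^ (2*n)) * Real.exp (-b*x^2) := by
          rw [← habs]; exact mul_le_mul_of_nonneg_right hx (Real.exp_pos _).le
      _ = Real.exp (-b*x^2) + x^(2*n) * Real.exp (-b*x^2) := by ring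

lemma gauss_moment_rec {b : ℝ} (hb : 0 < b) (n : ℕ) :
    ∫ x : ℝ, x ^ (n+2) * Real.exp (-b * x ^ 2)
      = ((n+1 : ℝ)/(2*b)) * ∫ x : ℝ, x ^ n * Real.exp (-b * x ^ 2) := by
  have hderiv : ∀ x : ℝ, HasDerivAt (fun x : ℝ => x ^ (n+1) * Real.exp (-b * x ^ 2))
      ((n+1 : ℝ) * (x ^ n * Real.exp (-b * x ^ 2))
        - (2*b) * (x ^ (n+2) * Real.exp (-b * x ^ 2))) x := by
    intro x
    have h1 : HasDerivAt (fun x : ℝ => x ^ (n+1)) ((n+1 : ℝ) * x ^ n) x := by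
      simpa using hasDerivAt_pow (n+1) x
    have h2 : HasDerivAt (fun x : ℝ => Real.exp (-b * x ^ 2))
        (Real.exp (-b * x ^ 2) * (-b * (2*x))) x := by
      have h3 : HasDerivAt (fun x : ℝ => -b * x ^ 2) (-b * (2*x)) x := by
        simpa using (hasDerivAt_pow 2 x).const_mul (-b)
      exact h3.exp
    refine (h1.mul h2).congr_deriv ?_
    ring
  have key := integral_eq_zero_of_hasDerivAt_of_integrable hderiv
    (((integrable_pow_mul_gauss hb n).const_mul _).sub
      ((integrable_pow_mul_gauss hb (n+2)).const_mul _))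
    (integrable_pow_mul_gauss hb (n+1))
  rw [integral_sub ((integrable_pow_mul_gauss hb n).const_mul _)
      ((integrable_pow_mul_gauss hb (n+2)).const_mul _),
    MeasureTheory.integral_const_mul, MeasureTheory.integral_const_mul] at key
  have hb' : (2*b) ≠ 0 := by positivity
  rw [div_mul_eq_mul_div, eq_comm, div_eq_iff hb']
  linarith [key]

lemma gauss_poly_integral {b : ℝ} (hb : 0 < b) (c0 c2 c4 c6 c8 : ℝ) :
    ∫ x : ℝ, (c0 + c2*x^2 + c4*x^4 + c6*x^6 + c8*x^8) * Real.exp (-b * x ^ 2)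
      = (c0 + c2/(2*b) + c4*3/(4*b^2) + c6*15/(8*b^3) + c8*105/(16*b^4))
          * Real.sqrt (π/b) := by
  have hbne : b ≠ 0 := ne_of_gt hb
  have I0 : (∫ x : ℝ, x ^ 0 * Real.exp (-b*x^2)) = Real.sqrt (π/b) := by
    simpa using integral_gaussian b
  have I2 : (∫ x : ℝ, x ^ 2 * Real.exp (-b*x^2)) = 1/(2*b) * Real.sqrt (π/b) := by
    have h := gauss_moment_rec hb 0
    rw [I0] at h; rw [h]; norm_num
  have I4 : (∫ x : ℝ, x ^ 4 * Real.exp (-b*x^2)) = 3/(4*b^2) * Real.sqrt (π/b) := by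
    have h := gauss_moment_rec hb 2
    rw [I2] at h; rw [h]; field_simp; ring
  have I6 : (∫ x : ℝ, x ^ 6 * Real.exp (-b*x^2)) = 15/(8*b^3) * Real.sqrt (π/b) := by
    have h := gauss_moment_rec hb 4
    rw [I4] at h; rw [h]; field_simp; ring
  have I8 : (∫ x : ℝ, x ^ 8 * Real.exp (-b*x^2)) = 105/(16*b^4) * Real.sqrt (π/b) := by
    have h := gauss_moment_rec hb 6
    rw [I6] at h; rw [h]; field_simp; ring
  have split : (fun x : ℝ => (c0 + c2*x^2 + c4*x^4 + c6*x^6 + c8*x^8) * Real.exp (-b * x ^ 2))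
      = fun x : ℝ => c0 * (x^0 * Real.exp (-b*x^2)) + c2 * (x^2 * Real.exp (-b*x^2))
        + c4 * (x^4 * Real.exp (-b*x^2)) + c6 * (x^6 * Real.exp (-b*x^2))
        + c8 * (x^8 * Real.exp (-b*x^2)) := by
    funext x; ring
  rw [split]
  have i0 := (integrable_pow_mul_gauss hb 0).const_mul c0
  have i2 := (integrable_pow_mul_gauss hb 2).const_mul c2
  have i4 := (integrable_pow_mul_gauss hb 4).const_mul c4
  have i6 := (integrable_pow_mul_gauss hb 6).const_mul c6
  have i8 := (integrable_pow_mul_gauss hb 8).const_mul c8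
  have J : ∀ (f g : ℝ → ℝ), Integrable f volume → Integrable g volume →
      (∫ x : ℝ, (f x + g x)) = (∫ x : ℝ, f x) + ∫ x : ℝ, g x :=
    fun f g hf hg => integral_add hf hg
  have i02 : Integrable (fun x : ℝ => c0 * (x^0 * Real.exp (-b*x^2))
      + c2 * (x^2 * Real.exp (-b*x^2))) volume := i0.add i2
  have i04 : Integrable (fun x : ℝ => c0 * (x^0 * Real.exp (-b*x^2))
      + c2 * (x^2 * Real.exp (-b*x^2)) + c4 * (x^4 * Real.exp (-b*x^2))) volume := i02.add i4
  have i06 : Integrable (fun x : ℝ => c0 * (x^0 * Real.exp (-b*x^2))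
      + c2 * (x^2 * Real.exp (-b*x^2)) + c4 * (x^4 * Real.exp (-b*x^2))
      + c6 * (x^6 * Real.exp (-b*x^2))) volume := i04.add i6
  rw [J _ _ i06 i8, J _ _ i04 i6, J _ _ i02 i4, J _ _ i0 i2]
  rw [MeasureTheory.integral_const_mul, MeasureTheory.integral_const_mul,
    MeasureTheory.integral_const_mul, MeasureTheory.integral_const_mul,
    MeasureTheory.integral_const_mul, I0, I2, I4, I6, I8]
  ring

lemma hh0 (u : ℝ) : hermiteFun 0 u = (2:ℝ) ^ ((1:ℝ)/4) * Real.exp (-π * u ^ 2) := by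
  simp [hermiteFun, Polynomial.hermite_zero]

lemma hh4 (u : ℝ) : hermiteFun 4 u = (2:ℝ) ^ ((1:ℝ)/4) / Real.sqrt 24 *
    (16*π^2*u^4 - 24*π*u^2 + 3) * Real.exp (-π * u ^ 2) := by
  have hs : Real.sqrt π ^ 2 = π := Real.sq_sqrt pi_pos.le
  have : (Polynomial.aeval (2 * Real.sqrt π * u) (Polynomial.hermite 4) : ℝ)
      = 16*π^2*u^4 - 24*π*u^2 + 3 := by
    rw [hermite_four]
    simp only [map_add, map_sub, map_mul, map_pow, Polynomial.aeval_X, Polynomial.aeval_C]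
    simp only [eq_intCast]
    push_cast
    linear_combination (16*u^4*(Real.sqrt π^2 + π) - 24*u^2) * hs
  rw [hermiteFun]
  rw [this]
  norm_num [Nat.factorial]

/-- Up to scalars, `h = (√3/(4·2^{3/4})) h₄ - (3/2^{17/4}) h₀` is the unique linear
combination of `h₀, h₄` with vanishing integral, and `‖h‖ = √33/2^{17/4}`. -/
theorem hermite_combination_vanishing_integral :
    (∫ u : ℝ, (Real.sqrt 3 / (4 * (2 : ℝ) ^ ((3 : ℝ) / 4)) * hermiteFun 4 u -
        3 / (2 : ℝ) ^ ((17 : ℝ) / 4) * hermiteFun 0 u)) = 0 ∧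
    (∫ u : ℝ, (Real.sqrt 3 / (4 * (2 : ℝ) ^ ((3 : ℝ) / 4)) * hermiteFun 4 u -
        3 / (2 : ℝ) ^ ((17 : ℝ) / 4) * hermiteFun 0 u) ^ 2) =
      (Real.sqrt 33 / (2 : ℝ) ^ ((17 : ℝ) / 4)) ^ 2 ∧
    ∀ a b : ℝ, (∫ u : ℝ, (a * hermiteFun 0 u + b * hermiteFun 4 u)) = 0 →
      ∃ c : ℝ, ∀ u : ℝ,
        a * hermiteFun 0 u + b * hermiteFun 4 u =
          c * (Real.sqrt 3 / (4 * (2 : ℝ) ^ ((3 : ℝ) / 4)) * hermiteFun 4 u -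
            3 / (2 : ℝ) ^ ((17 : ℝ) / 4) * hermiteFun 0 u) := by
  have hpi := Real.pi_pos
  have hpne := Real.pi_ne_zero
  set t : ℝ := (2:ℝ) ^ ((1:ℝ)/4) with htdef
  have ht : 0 < t := Real.rpow_pos_of_pos two_pos _
  have ht4 : t ^ 4 = 2 := by
    rw [htdef, ← Real.rpow_natCast ((2:ℝ) ^ ((1:ℝ)/4)) 4, ← Real.rpow_mul two_pos.le]
    norm_num
  have ht2 : t ^ 2 = Real.sqrt 2 := by
    rw [htdef, ← Real.rpow_natCast ((2:ℝ) ^ ((1:ℝ)/4)) 2, ← Real.rpow_mul two_pos.le,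
      Real.sqrt_eq_rpow]
    norm_num
  have h34 : (2:ℝ) ^ ((3:ℝ)/4) = 2/t := by
    rw [htdef, eq_div_iff (ne_of_gt ht), htdef, ← Real.rpow_add two_pos]
    norm_num
  have h174 : (2:ℝ) ^ ((17:ℝ)/4) = 16*t := by
    rw [htdef, show (17:ℝ)/4 = 4 + 1/4 by norm_num, Real.rpow_add two_pos]
    norm_num
  have hs3 : Real.sqrt 3 ^ 2 = 3 := Real.sq_sqrt (by norm_num)
  have hs3p : (0:ℝ) < Real.sqrt 3 := Real.sqrt_pos.mpr (by norm_num)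
  have h24 : Real.sqrt 24 = 2 * Real.sqrt 3 * t ^ 2 := by
    rw [ht2, show (24:ℝ) = (2 * Real.sqrt 3 * Real.sqrt 2)^2 by
      rw [mul_pow, mul_pow, Real.sq_sqrt (by norm_num : (0:ℝ) ≤ 3),
        Real.sq_sqrt (by norm_num : (0:ℝ) ≤ 2)]; norm_num,
      Real.sqrt_sq (by positivity)]
  have hppi : π / π = 1 := div_self hpne
  simp only [h34, h174]
  refine ⟨?_, ?_, ?_⟩
  · have e1 : (∫ u : ℝ, (Real.sqrt 3 / (4 * (2/t)) * hermiteFun 4 u -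
        3 / (16*t) * hermiteFun 0 u))
        = ∫ u : ℝ, ((3 * (Real.sqrt 3 / (4 * (2/t)) * (t / Real.sqrt 24)) - (3/(16*t))*t)
            + (-24*π*(Real.sqrt 3 / (4 * (2/t)) * (t / Real.sqrt 24)))*u^2
            + (16*π^2*(Real.sqrt 3 / (4 * (2/t)) * (t / Real.sqrt 24)))*u^4
            + 0*u^6 + 0*u^8) * Real.exp (-π * u ^ 2) := by
      congr 1; funext u; rw [hh4 u, hh0 u]; ring
    rw [e1, gauss_poly_integral hpi, hppi, Real.sqrt_one, mul_one, h24]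
    field_simp
    ring
  · have hE2 : ∀ u : ℝ, Real.exp (-π * u ^ 2) * Real.exp (-π * u ^ 2)
        = Real.exp (-(2*π) * u ^ 2) := by
      intro u; rw [← Real.exp_add]; ring_nf
    have hA : Real.sqrt 3 / (4 * (2/t)) * (t / Real.sqrt 24) = 1/16 := by
      rw [h24]; field_simp; ring
    have hB : 3 / (16*t) * t = 3/16 := by field_simp
    have e2 : (∫ u : ℝ, (Real.sqrt 3 / (4 * (2/t)) * hermiteFun 4 u -
        3 / (16*t) * hermiteFun 0 u) ^ 2)
        = ∫ u : ℝ, ((0:ℝ) + 0*u^2 + (9/4*π^2)*u^4 + (-3*π^3)*u^6 + (π^4)*u^8)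
            * Real.exp (-(2*π) * u ^ 2) := by
      congr 1; funext u; rw [hh4 u, hh0 u]
      have hX := hE2 u
      linear_combination (Real.sqrt 3 / (4 * (2/t)) * (t / Real.sqrt 24)
            * (16*π^2*u^4 - 24*π*u^2 + 3) - (3/(16*t))*t)^2 * hX
        + ((Real.sqrt 3 / (4 * (2/t)) * (t / Real.sqrt 24)
            * (16*π^2*u^4 - 24*π*u^2 + 3) - (3/(16*t))*t
            + ((1/16) * (16*π^2*u^4 - 24*π*u^2 + 3) - 3/16))
           * Real.exp (-(2*π) * u ^ 2))
          * ((16*π^2*u^4 - 24*π*u^2 + 3) * hA - hB)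
    have val2 : (∫ u : ℝ, ((0:ℝ) + 0*u^2 + (9/4*π^2)*u^4 + (-3*π^3)*u^6 + (π^4)*u^8)
        * Real.exp (-(2*π) * u ^ 2)) = 33/256 * Real.sqrt (π/(2*π)) := by
      rw [gauss_poly_integral (by positivity : (0:ℝ) < 2*π)]
      congr 1
      field_simp
      ring
    rw [e2, val2]
    have hhalf : Real.sqrt (π/(2*π)) = t^2/2 := by
      rw [show π/(2*π) = 1/2 by field_simp, ht2,
        show (1/2:ℝ) = (Real.sqrt 2/2)^2 by
          rw [div_pow, Real.sq_sqrt (by norm_num : (0:ℝ) ≤ 2)]; norm_num,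
        Real.sqrt_sq (by positivity)]
    rw [hhalf, div_pow, Real.sq_sqrt (by norm_num : (0:ℝ) ≤ 33)]
    field_simp
    linarith [ht4]
  · intro a b hab
    have e3 : (∫ u : ℝ, (a * hermiteFun 0 u + b * hermiteFun 4 u))
        = ∫ u : ℝ, ((a*t + b*(t/Real.sqrt 24)*3)
            + (b*(t/Real.sqrt 24)*(-24*π))*u^2
            + (b*(t/Real.sqrt 24)*(16*π^2))*u^4 + 0*u^6 + 0*u^8)
            * Real.exp (-π * u ^ 2) := by
      congr 1; funext u; rw [hh4 u, hh0 u]; ring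
    rw [e3, gauss_poly_integral hpi, hppi, Real.sqrt_one, mul_one] at hab
    have hs24p : 0 < Real.sqrt 24 := Real.sqrt_pos.mpr (by norm_num)
    field_simp at hab
    have h1 : (8*π^3*Real.sqrt 24^2) * (a*t*Real.sqrt 24 + 3*b*t) = 0 := by
      have h0 : π^4 * (a*t*Real.sqrt 24 + 3*b*t) = 0 := by linear_combination hab / 1024
      rw [(mul_eq_zero.mp h0).resolve_left (by positivity), mul_zero]
    have h2 : a*t*Real.sqrt 24 + 3*b*t = 0 :=
      (mul_eq_zero.mp h1).resolve_left (by positivity)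
    have key : a*t + 3*b*t/(2*Real.sqrt 3*t^2) = 0 := by
      rw [← h24]
      field_simp
      linear_combination h2
    refine ⟨8*b/(Real.sqrt 3*t), fun u => ?_⟩
    rw [hh4 u, hh0 u]
    have q1 : 8*b/(Real.sqrt 3*t) * (Real.sqrt 3 / (4 * (2/t))) = b := by
      field_simp
      ring
    have q2 : 8*b/(Real.sqrt 3*t)*(3/(16*t))*t + a*t = 0 := by
      field_simp at key ⊢
      linear_combination 8 * key
    linear_combination (Real.exp (-π * u ^ 2)) * q2
      - (t / Real.sqrt 24 * (16*π^2*u^4 - 24*π*u^2 + 3) * Real.exp (-π * u ^ 2)) * q1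
end
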